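/- Let B = ⟨·,·⟩ be a supertropical bilinear form on a D(ℝ)-submodule V ⊆ D(ℝ)^(n), let w₁, …, w_m ∈ V, and let W be the set of vectors of V tropically spanned by {w₁,…,w_m}. If β₁, …, β_m ∈ T ∪ {-∞} satisfy ∑ᵢ βᵢ⟨v, wᵢ⟩ ∈ G₀ for every v ∈ V, then ⟨v, ∑ᵢ βᵢwᵢ⟩ ∈ G₀ for every v ∈ W. -/

import Mathlib

noncomputable section

/-- The extended tropical semifield `D(ℝ)`: `bot` is `-∞`; `nb g r` is the element of
underlying value `r : ℝ`, ghost if `g = true`, tangible if `g = false`. -/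
inductive DR : Type where
  | bot : DR
  | nb : Bool → ℝ → DR

namespace DR

/-- Supertropical addition on `D(ℝ)`. -/
def add : DR → DR → DR
  | bot, y => y
  | x, bot => x
  | nb b r, nb c s => if r < s then nb c s else if s < r then nb b r else nb true r

/-- Supertropical multiplication on `D(ℝ)`. -/
def mul : DR → DR → DR
  | bot, _ => bot
  | _, bot => bot
  | nb b r, nb c s => nb (b || c) (r + s)

theorem bot_add (x : DR) : add bot x = x := by cases x <;> rfl

theorem add_bot (x : DR) : add x bot = x := by cases x <;> rfl

theorem bot_mul (x : DR) : mul bot x = bot := by cases x <;> rfl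

theorem mul_bot (x : DR) : mul x bot = bot := by cases x <;> rfl

theorem add_comm' (x y : DR) : add x y = add y x := by
  cases x <;> cases y <;> (try rfl)
  simp only [add]
  split_ifs <;>
    first
      | rfl
      | (exfalso; linarith)
      | (congr 1 <;> first | rfl | linarith)

theorem add_assoc' (x y z : DR) : add (add x y) z = add x (add y z) := by
  cases x with
  | bot => rw [bot_add, bot_add]
  | nb b r =>
    cases y with
    | bot => rw [add_bot, bot_add]
    | nb c s =>
      cases z with
      | bot => rw [add_bot, add_bot]
      | nb d t =>
        simp only [add]
        split_ifs <;>
          simp only [add] <;>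
          (try split_ifs) <;>
          first
            | rfl
            | (exfalso; linarith)
            | (congr 1 <;> first | rfl | linarith)

theorem mul_comm' (x y : DR) : mul x y = mul y x := by
  cases x <;> cases y <;> (try rfl)
  simp [mul, Bool.or_comm, add_comm]

theorem mul_assoc' (x y z : DR) : mul (mul x y) z = mul x (mul y z) := by
  cases x <;> cases y <;> cases z <;> (try rfl) <;>
    simp [mul, Bool.or_assoc, add_assoc]

theorem one_mul' (x : DR) : mul (nb false 0) x = x := by
  cases x <;> simp [mul]

theorem left_distrib' (x y z : DR) : mul x (add y z) = add (mul x y) (mul x z) := by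
  cases x with
  | bot => simp [bot_mul, bot_add]
  | nb b r =>
    cases y with
    | bot => simp [bot_add, mul_bot]
    | nb c s =>
      cases z with
      | bot => simp [add_bot, mul_bot]
      | nb d t =>
        simp only [mul, add]
        split_ifs <;>
          simp only [mul, add, Bool.or_true, Bool.true_or] <;>
          (try split_ifs) <;>
          first
            | rfl
            | (exfalso; linarith)
            | (congr 1 <;> first | rfl | linarith)

theorem right_distrib' (x y z : DR) : mul (add x y) z = add (mul x z) (mul y z) := by
  rw [mul_comm' (add x y) z, left_distrib', mul_comm' z x, mul_comm' z y]

instance : Add DR := ⟨add⟩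
instance : Zero DR := ⟨bot⟩
instance : Mul DR := ⟨mul⟩
instance : One DR := ⟨nb false 0⟩

instance : AddCommMonoid DR where
  add := add
  add_assoc := add_assoc'
  zero := bot
  zero_add := bot_add
  add_zero := add_bot
  add_comm := add_comm'
  nsmul := nsmulRec

instance : CommMonoid DR where
  mul := mul
  mul_assoc := mul_assoc'
  one := nb false 0
  one_mul := one_mul'
  mul_one := fun x => by show mul x (nb false 0) = x; rw [mul_comm']; exact one_mul' x
  mul_comm := mul_comm'
  npow := npowRec

instance : CommSemiring DR where
  __ := (inferInstance : AddCommMonoid DR)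
  __ := (inferInstance : CommMonoid DR)
  left_distrib := left_distrib'
  right_distrib := right_distrib'
  zero_mul := bot_mul
  mul_zero := mul_bot

/-- The ghost ideal `G₀ = ℝ^ν ∪ {-∞}` as a predicate. -/
def IsGhost : DR → Prop
  | bot => True
  | nb b _ => b = true

/-- The tangible elements `T = ℝ` as a predicate. -/
def Tangible : DR → Prop
  | nb false _ => True
  | _ => False

/-- Membership in `T ∪ {-∞}`. -/
def TangibleOrBot (x : DR) : Prop := x = bot ∨ Tangible x

/-- The underlying value in `ℝ ∪ {-∞}`. -/
def val : DR → WithBot ℝ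
  | bot => ⊥
  | nb _ r => (r : WithBot ℝ)

/-- `x ≤_ν y` : comparison of underlying values, `-∞` smallest. -/
def nuLe (x y : DR) : Prop := val x ≤ val y

/-- `x <_ν y` : strict comparison of underlying values, `-∞` smallest. -/
def nuLt (x y : DR) : Prop := val x < val y

/-- The tangible lift `x̂` of `x` (with `hat bot = bot`). -/
def hat : DR → DR
  | bot => bot
  | nb _ r => nb false r

/-- The ghost map `ν`. -/
def nu : DR → DR
  | bot => bot
  | nb _ r => nb true r

/-- The ghost-surpass relation `x ⊨ y` on `D(ℝ)`. -/
def GhostSurp (x y : DR) : Prop := ∃ c : DR, IsGhost c ∧ x = y + c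

end DR

open DR

/-- A vector in `D(ℝ)^(n)` lies in the ghost submodule `G₀^(n)`. -/
def GhostVec {n : ℕ} (v : Fin n → DR) : Prop := ∀ j, IsGhost (v j)

/-- A tangible vector: all entries in `T ∪ {-∞}`. -/
def TangibleVec {n : ℕ} (v : Fin n → DR) : Prop := ∀ j, TangibleOrBot (v j)

/-- The ghost-surpass relation `v ⊨ w` on vectors. -/
def GhostSurpVec {n : ℕ} (v w : Fin n → DR) : Prop :=
  ∃ u : Fin n → DR, GhostVec u ∧ v = w + u

/-- A family of vectors is tropically dependent. -/
def TropDep {ι : Type*} [Fintype ι] {n : ℕ} (w : ι → Fin n → DR) : Prop :=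
  ∃ I : Finset ι, I.Nonempty ∧ ∃ α : ι → DR, (∀ i ∈ I, Tangible (α i)) ∧
    ∀ j : Fin n, IsGhost (∑ i ∈ I, α i * w i j)

/-- A family of vectors is tropically independent. -/
def TropIndep {ι : Type*} [Fintype ι] {n : ℕ} (w : ι → Fin n → DR) : Prop := ¬ TropDep w

/-- A set of vectors is tropically dependent. -/
def SetTropDep {n : ℕ} (S : Set (Fin n → DR)) : Prop :=
  ∃ I : Finset (Fin n → DR), ↑I ⊆ S ∧ I.Nonempty ∧
    ∃ α : (Fin n → DR) → DR, (∀ w ∈ I, Tangible (α w)) ∧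
      ∀ j : Fin n, IsGhost (∑ w ∈ I, α w * w j)

/-- A set of vectors is tropically independent. -/
def SetTropIndep {n : ℕ} (S : Set (Fin n → DR)) : Prop := ¬ SetTropDep S

/-- A d-base of `V`: a maximal tropically independent subset of `V`. -/
def IsDBase {n : ℕ} (V S : Set (Fin n → DR)) : Prop :=
  S ⊆ V ∧ SetTropIndep S ∧ ∀ S', S ⊆ S' → S' ⊆ V → SetTropIndep S' → S' = S

/-- The rank of `V`: the maximal number of elements of a d-base of `V`. -/
noncomputable def trank {n : ℕ} (V : Set (Fin n → DR)) : ℕ :=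
  sSup {m | ∃ S, IsDBase V S ∧ S.Finite ∧ S.ncard = m}

/-- `v` is tropically spanned by `S`. -/
def SpannedBy {n : ℕ} (S : Set (Fin n → DR)) (v : Fin n → DR) : Prop :=
  ∃ I : Finset (Fin n → DR), ↑I ⊆ S ∧ I.Nonempty ∧
    ∃ α : (Fin n → DR) → DR, (∀ w ∈ I, Tangible (α w)) ∧
      GhostSurpVec v (fun j => ∑ w ∈ I, α w * w j)

/-- The tropical determinant (permanent) of a square matrix over `D(ℝ)`. -/
noncomputable def tperm {k : ℕ} (A : Matrix (Fin k) (Fin k) DR) : DR :=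
  ∑ π : Equiv.Perm (Fin k), ∏ i, A (π i) i

/-- A supertropical bilinear form on a subspace `V` of `D(ℝ)^(n)`. -/
structure SupertropicalBilinear (n : ℕ) (V : Set (Fin n → DR)) where
  B : (Fin n → DR) → (Fin n → DR) → DR
  add_left : ∀ u v w, u ∈ V → v ∈ V → w ∈ V → GhostSurp (B (v + w) u) (B v u + B w u)
  add_right : ∀ u v w, u ∈ V → v ∈ V → w ∈ V → GhostSurp (B u (v + w)) (B u v + B u w)
  smul_left : ∀ (α : DR) (v u : Fin n → DR), v ∈ V → u ∈ V → B (α • v) u = α * B v u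
  smul_right : ∀ (α : DR) (u w : Fin n → DR), u ∈ V → w ∈ V → B u (α • w) = α * B u w
  ghost_left : ∀ v w, v ∈ V → w ∈ V → GhostVec v → IsGhost (B v w)
  ghost_right : ∀ v w, v ∈ V → w ∈ V → GhostVec w → IsGhost (B v w)

/-! Additivity and homogeneity of the form in its second argument give
`⟨v, ∑ᵢ βᵢwᵢ⟩ ⊨ ∑ᵢ βᵢ⟨v, wᵢ⟩`, and whatever ghost-surpasses a ghost
is itself ghost. -/

namespace DR

theorem IsGhost.add {x y : DR} (hx : IsGhost x) (hy : IsGhost y) : IsGhost (x + y) := by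
  change IsGhost (DR.add x y)
  rcases x with _ | ⟨b, r⟩
  · rwa [bot_add]
  rcases y with _ | ⟨c, s⟩
  · rwa [add_bot]
  simp only [DR.add]
  split_ifs <;> first | exact hy | exact hx | trivial

theorem GhostSurp.isGhost {x y : DR} (hxy : GhostSurp x y) (hy : IsGhost y) : IsGhost x := by
  obtain ⟨c, hc, rfl⟩ := hxy
  exact hy.add hc

theorem GhostSurp.trans {x y z : DR} (hxy : GhostSurp x y) (hyz : GhostSurp y z) :
    GhostSurp x z := by
  obtain ⟨c, hc, rfl⟩ := hxy
  obtain ⟨d, hd, rfl⟩ := hyz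
  exact ⟨d + c, hd.add hc, add_assoc _ _ _⟩

theorem GhostSurp.add_left {x y : DR} (a : DR) (hxy : GhostSurp x y) :
    GhostSurp (a + x) (a + y) := by
  obtain ⟨c, hc, rfl⟩ := hxy
  exact ⟨c, hc, (add_assoc _ _ _).symm⟩

end DR

namespace SupertropicalBilinear

variable {n : ℕ} {V : Submodule DR (Fin n → DR)}
  (Bl : SupertropicalBilinear n (V : Set (Fin n → DR)))

theorem ghostSurp_sum_right {ι : Type*} (s : Finset ι) {u : ι → Fin n → DR}
    (hu : ∀ i ∈ s, u i ∈ V) {v : Fin n → DR} (hv : v ∈ V) :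
    GhostSurp (Bl.B v (∑ i ∈ s, u i)) (∑ i ∈ s, Bl.B v (u i)) := by
  induction s using Finset.cons_induction with
  | empty =>
    exact ⟨Bl.B v 0, Bl.ghost_right v 0 hv V.zero_mem fun _ => trivial, (zero_add _).symm⟩
  | cons a s _ ih =>
    rw [Finset.forall_mem_cons] at hu
    rw [Finset.sum_cons, Finset.sum_cons]
    exact (Bl.add_right v (u a) _ hv hu.1 (V.sum_mem hu.2)).trans ((ih hu.2).add_left _)

theorem ghostSurp_sum_smul_right {ι : Type*} (s : Finset ι) (β : ι → DR)
    {w : ι → Fin n → DR} (hw : ∀ i ∈ s, w i ∈ V) {v : Fin n → DR} (hv : v ∈ V) :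
    GhostSurp (Bl.B v (∑ i ∈ s, β i • w i)) (∑ i ∈ s, β i * Bl.B v (w i)) := by
  have hsmul : ∑ i ∈ s, Bl.B v (β i • w i) = ∑ i ∈ s, β i * Bl.B v (w i) :=
    Finset.sum_congr rfl fun i hi => Bl.smul_right (β i) v (w i) hv (hw i hi)
  rw [← hsmul]
  exact Bl.ghostSurp_sum_right s (fun i hi => V.smul_mem (β i) (hw i hi)) hv

end SupertropicalBilinear

theorem radical_combination_general (n m : ℕ) (V : Submodule DR (Fin n → DR))
    (Bl : SupertropicalBilinear n (V : Set (Fin n → DR)))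
    (w : Fin m → Fin n → DR) (hw : ∀ i, w i ∈ V)
    (β : Fin m → DR)
    (h : ∀ v ∈ V, IsGhost (∑ i, β i * Bl.B v (w i))) :
    ∀ v ∈ V, SpannedBy (Set.range w) v →
      IsGhost (Bl.B v (fun j => ∑ i, β i * w i j)) := by
  intro v hv _
  have hcomb : (fun j => ∑ i, β i * w i j) = ∑ i, β i • w i := by
    ext j
    simp only [Finset.sum_apply, Pi.smul_apply, smul_eq_mul]
  rw [hcomb]
  exact (Bl.ghostSurp_sum_smul_right Finset.univ β (fun i _ => hw i) hv).isGhost (h v hv)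

/-- If `∑ᵢ βᵢ ⟨v, wᵢ⟩` is ghost for every `v ∈ V`, then `⟨v, ∑ᵢ βᵢ wᵢ⟩` is ghost
for every `v` in the subspace of `V` tropically spanned by the `wᵢ`. -/
theorem radical_combination (n m : ℕ) (V : Submodule DR (Fin n → DR))
    (Bl : SupertropicalBilinear n (V : Set (Fin n → DR)))
    (w : Fin m → Fin n → DR) (hw : ∀ i, w i ∈ V)
    (β : Fin m → DR) (hβ : ∀ i, TangibleOrBot (β i))
    (h : ∀ v ∈ V, IsGhost (∑ i, β i * Bl.B v (w i))) :
    ∀ v ∈ V, SpannedBy (Set.range w) v →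
      IsGhost (Bl.B v (fun j => ∑ i, β i * w i j)) :=
  radical_combination_general n m V Bl w hw β h
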